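/- arXiv:math/0611542 — 2 statements merged into one kernel-verified Lean document; each statement's English description precedes it below -/
import Mathlib

section
/- Let Q be a finite quiver and I an admissible ideal of kQ generated by monomial and binomial relations. Then the presentation (Q,I) is homotopy coherent: for any two paths w, w' in Q with w ∼ w', one has w ∈ I if and only if w' ∈ I. -/
open Quiver

universe v u

/-- The type of all paths in the quiver `V`, together with their endpoints. -/
abbrev PathsIn (V : Type u) [Quiver.{v + 1} V] : Type (max u (v + 1)) :=
  Σ x y : V, Quiver.Path x y

variable (k : Type*) [Field k] (V : Type u) [Quiver.{v + 1} V]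

/-- The underlying vector space of the path algebra: the free `k`-module on paths. -/
abbrev PathVec := (PathsIn V) →₀ k

/-- The length of a path. -/
def pathLen (p : PathsIn V) : ℕ := p.2.2.length

/-- Composition of composable paths. -/
def pcomp (p q : PathsIn V) (h : p.2.1 = q.1) : PathsIn V :=
  ⟨p.1, q.2.1, p.2.2.comp (h.symm ▸ q.2.2)⟩

open scoped Classical in
/-- Multiplication `u ρ w` of an element `ρ` of the path algebra by paths `u`, `w`. -/
noncomputable def pmul (u : PathsIn V) (ρ : PathVec k V) (w : PathsIn V) : PathVec k V :=
  ρ.sum fun p c => if h : u.2.1 = p.1 ∧ p.2.1 = w.1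
    then Finsupp.single (pcomp V (pcomp V u p h.1) w h.2) c else 0

/-- The two-sided ideal of the path algebra generated by a set `S`. -/
noncomputable def idealGen (S : Set (PathVec k V)) : Submodule k (PathVec k V) :=
  Submodule.span k {x | ∃ u ρ w, ρ ∈ S ∧ x = pmul k V u ρ w}

open scoped Classical in
/-- A minimal relation: an element of `I`, with all paths in its support parallel,
such that no proper nonempty subsum lies in `I`. -/
def IsMinimalRelation (I : Submodule k (PathVec k V)) (ρ : PathVec k V) : Prop :=
  ρ ∈ I ∧ (∃ x y : V, ∀ p ∈ ρ.support, p.1 = x ∧ p.2.1 = y) ∧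
    ∀ J : Finset (PathsIn V), J ⊆ ρ.support → J.Nonempty → J ≠ ρ.support →
      ρ.filter (· ∈ J) ∉ I

/-- The homotopy relation `∼` on paths: the smallest equivalence relation such that
paths appearing in a minimal relation are equivalent, compatible with two-sided
composition. -/
inductive HRel (I : Submodule k (PathVec k V)) : PathsIn V → PathsIn V → Prop
  | of (ρ : PathVec k V) (hρ : IsMinimalRelation k V I ρ) (p q : PathsIn V)
      (hp : p ∈ ρ.support) (hq : q ∈ ρ.support) : HRel I p q
  | refl (p : PathsIn V) : HRel I p p
  | symm {p q} : HRel I p q → HRel I q p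
  | trans {p q r} : HRel I p q → HRel I q r → HRel I p r
  | compat (a x y b : V) (u v : Quiver.Path x y) (w : Quiver.Path a x) (w' : Quiver.Path y b) :
      HRel I ⟨x, y, u⟩ ⟨x, y, v⟩ →
      HRel I ⟨a, b, (w.comp u).comp w'⟩ ⟨a, b, (w.comp v).comp w'⟩

/-- A path lies in `I` (i.e. is zero in `A = kQ/I`). -/
def memI (I : Submodule k (PathVec k V)) (p : PathsIn V) : Prop :=
  (Finsupp.single p 1 : PathVec k V) ∈ I

/-- The span of paths of length at least `m` (the `m`-th power of the arrow ideal). -/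
noncomputable def arrowPow (m : ℕ) : Submodule k (PathVec k V) :=
  Submodule.span k {x | ∃ p : PathsIn V, m ≤ pathLen V p ∧ x = Finsupp.single p 1}

/-- The ideal `I` is admissible: `F^m ⊆ I ⊆ F^2` for some `m ≥ 2`. -/
def IsAdmissible (I : Submodule k (PathVec k V)) : Prop :=
  (∃ m, 2 ≤ m ∧ arrowPow k V m ≤ I) ∧ I ≤ arrowPow k V 2

/-- Homotopy coherence of a presentation. -/
def HomotopyCoherent (I : Submodule k (PathVec k V)) : Prop :=
  ∀ p q, HRel k V I p q → (memI k V I p ↔ memI k V I q)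

/-! Every generator `u ρ w` of `I = ⟨S⟩` has at most two terms. Call two paths *linked* if
they occur in a common generator `u ρ w`, and let `≈` be the equivalence relation generated by
linking. Since `u ρ w = a • p + b • q ∈ I`, a path `p ∈ I` forces `q ∈ I`, so `≈` respects
membership in `I`. Each generator is supported in a single `≈`-class, so every element of `I`
splits into its `≈`-class components, each of them again in `I`; by minimality, the support of a
minimal relation lies in one `≈`-class. As `≈` is compatible with composition, `∼ ⊆ ≈`. -/

section Linking

open scoped Classical

variable {k : Type*} [Field k] {V : Type u} [Quiver.{v + 1} V]

lemma pcomp_pcomp_pcomp_pcomp (a u p w b : PathsIn V) (hu : u.2.1 = p.1) (hw : p.2.1 = w.1)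
    (ha : a.2.1 = u.1) (hb : w.2.1 = b.1) :
    pcomp V (pcomp V a (pcomp V (pcomp V u p hu) w hw) ha) b hb
      = pcomp V (pcomp V (pcomp V a u ha) p hu) (pcomp V w b hb) hw := by
  obtain ⟨_, _, a⟩ := a
  obtain ⟨_, _, u⟩ := u
  obtain ⟨_, _, p⟩ := p
  obtain ⟨_, _, w⟩ := w
  obtain ⟨_, _, b⟩ := b
  dsimp only at hu hw ha hb
  subst hu hw ha hb
  simp [pcomp, Quiver.Path.comp_assoc]

lemma pcomp_pcomp_inj {u w p q : PathsIn V} {h₁ : u.2.1 = p.1} {h₂ : p.2.1 = w.1}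
    {h₁' : u.2.1 = q.1} {h₂' : q.2.1 = w.1}
    (h : pcomp V (pcomp V u p h₁) w h₂ = pcomp V (pcomp V u q h₁') w h₂') : p = q := by
  obtain ⟨_, _, u⟩ := u
  obtain ⟨_, _, p⟩ := p
  obtain ⟨_, _, q⟩ := q
  obtain ⟨_, _, w⟩ := w
  dsimp only at h₁ h₂ h₁' h₂'
  subst h₁ h₂ h₁' h₂'
  simpa [pcomp, Quiver.Path.comp_inj_left, Quiver.Path.comp_inj_right] using h

lemma pmul_apply_pcomp_pcomp (u w p : PathsIn V) (ρ : PathVec k V) (h₁ : u.2.1 = p.1)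
    (h₂ : p.2.1 = w.1) : pmul k V u ρ w (pcomp V (pcomp V u p h₁) w h₂) = ρ p := by
  rw [pmul, Finsupp.sum_apply, Finsupp.sum, Finset.sum_eq_single p]
  · simp [h₁, h₂]
  · intro q _ hqp
    split_ifs with h
    · exact Finsupp.single_eq_of_ne fun he => hqp (pcomp_pcomp_inj he.symm)
    · rfl
  · simp_all

lemma exists_eq_pcomp_of_mem_support_pmul {u w r : PathsIn V} {ρ : PathVec k V}
    (hr : r ∈ (pmul k V u ρ w).support) :
    ∃ p ∈ ρ.support, ∃ (h₁ : u.2.1 = p.1) (h₂ : p.2.1 = w.1),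
      r = pcomp V (pcomp V u p h₁) w h₂ := by
  obtain ⟨p, hp, hr⟩ := Finset.mem_biUnion.mp (Finsupp.support_sum hr)
  split_ifs at hr with h
  · exact ⟨p, hp, h.1, h.2, Finset.mem_singleton.mp (Finsupp.support_single_subset hr)⟩
  · simp at hr

lemma card_support_pmul_le (u w : PathsIn V) (ρ : PathVec k V) :
    (pmul k V u ρ w).support.card ≤ ρ.support.card := by
  refine (Finset.card_le_card Finsupp.support_sum).trans (Finset.card_biUnion_le.trans ?_)
  refine (Finset.sum_le_sum fun p _ => ?_).trans_eq (Finset.card_eq_sum_ones _).symm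
  split_ifs
  · exact (Finset.card_le_card Finsupp.support_single_subset).trans_eq (Finset.card_singleton _)
  · simp

lemma pmul_mem_idealGen {S : Set (PathVec k V)} {ρ : PathVec k V} (hρ : ρ ∈ S) (u w : PathsIn V) :
    pmul k V u ρ w ∈ idealGen k V S :=
  Submodule.subset_span ⟨u, ρ, w, hρ, rfl⟩

lemma Finsupp.filter_eq_self_or_eq_zero {α M : Type*} [Zero M] {f : α →₀ M} {P : α → Prop}
    [DecidablePred P] (hP : ∀ a ∈ f.support, ∀ b ∈ f.support, P a → P b) :
    f.filter P = f ∨ f.filter P = 0 := by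
  by_cases h : ∃ a ∈ f.support, P a
  · obtain ⟨a, ha, hPa⟩ := h
    exact .inl ((Finsupp.filter_eq_self_iff _ _).mpr fun b hb =>
      hP a ha b (Finsupp.mem_support_iff.mpr hb) hPa)
  · push Not at h
    exact .inr ((Finsupp.filter_eq_zero_iff _ _).mpr fun b hPb =>
      Finsupp.notMem_support_iff.mp fun hb => h b hb hPb)

lemma memI_of_memI_of_card_support_le_two {I : Submodule k (PathVec k V)} {g : PathVec k V}
    (hg : g ∈ I) (hcard : g.support.card ≤ 2) {p q : PathsIn V} (hp : p ∈ g.support)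
    (hq : q ∈ g.support) (h : memI k V I p) : memI k V I q := by
  by_cases hpq : p = q
  · exact hpq ▸ h
  have hsupp : g.support = {p, q} :=
    (Finset.eq_of_subset_of_card_le (Finset.insert_subset hp (Finset.singleton_subset_iff.mpr hq))
      (hcard.trans_eq (Finset.card_pair hpq).symm)).symm
  have hgq : g - g p • Finsupp.single p 1 = g q • Finsupp.single q 1 := by
    ext r
    by_cases hrp : r = p
    · subst hrp; simp [hpq]
    by_cases hrq : r = q
    · subst hrq; simp [hpq]
    have hr : r ∉ g.support := by simp [hsupp, hrp, hrq]
    simp [Ne.symm hrp, Ne.symm hrq, Finsupp.notMem_support_iff.mp hr]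
  have hqI : g q • Finsupp.single q 1 ∈ I := hgq ▸ I.sub_mem hg (I.smul_mem _ h)
  simpa [memI, smul_smul, inv_mul_cancel₀ (Finsupp.mem_support_iff.mp hq)] using
    I.smul_mem (g q)⁻¹ hqI

inductive Linked (S : Set (PathVec k V)) : PathsIn V → PathsIn V → Prop
  | intro (ρ : PathVec k V) (hρ : ρ ∈ S) (u p q w : PathsIn V) (hp : p ∈ ρ.support)
      (hq : q ∈ ρ.support) (h₁ : u.2.1 = p.1) (h₂ : p.2.1 = w.1) (h₁' : u.2.1 = q.1)
      (h₂' : q.2.1 = w.1) :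
      Linked S (pcomp V (pcomp V u p h₁) w h₂) (pcomp V (pcomp V u q h₁') w h₂')

namespace Linked

variable {S : Set (PathVec k V)}

lemma symm {p q : PathsIn V} (h : Linked S p q) : Linked S q p := by
  obtain ⟨ρ, hρ, u, p, q, w, hp, hq, h₁, h₂, h₁', h₂'⟩ := h
  exact intro ρ hρ u q p w hq hp h₁' h₂' h₁ h₂

lemma of_mem_support_pmul {ρ : PathVec k V} (hρ : ρ ∈ S) {u w p q : PathsIn V}
    (hp : p ∈ (pmul k V u ρ w).support) (hq : q ∈ (pmul k V u ρ w).support) : Linked S p q := by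
  obtain ⟨p', hp', h₁, h₂, rfl⟩ := exists_eq_pcomp_of_mem_support_pmul hp
  obtain ⟨q', hq', h₁', h₂', rfl⟩ := exists_eq_pcomp_of_mem_support_pmul hq
  exact intro ρ hρ u p' q' w hp' hq' h₁ h₂ h₁' h₂'

lemma ends_eq {p q : PathsIn V} (h : Linked S p q) : p.1 = q.1 ∧ p.2.1 = q.2.1 := by
  obtain ⟨⟩ := h
  exact ⟨rfl, rfl⟩

lemma pcomp_pcomp {p q : PathsIn V} (h : Linked S p q) (a b : PathsIn V)
    (ha : a.2.1 = p.1) (hb : p.2.1 = b.1) (ha' : a.2.1 = q.1) (hb' : q.2.1 = b.1) :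
    Linked S (pcomp V (pcomp V a p ha) b hb) (pcomp V (pcomp V a q ha') b hb') := by
  obtain ⟨ρ, hρ, u, p, q, w, hp, hq, h₁, h₂, h₁', h₂'⟩ := h
  convert intro ρ hρ (pcomp V a u ha) p q (pcomp V w b hb) hp hq h₁ h₂ h₁' h₂' using 1 <;>
    exact pcomp_pcomp_pcomp_pcomp ..

lemma memI_idealGen {p q : PathsIn V} (hcard : ∀ ρ ∈ S, ρ.support.card ≤ 2)
    (h : Linked S p q) (hp : memI k V (idealGen k V S) p) : memI k V (idealGen k V S) q := by
  obtain ⟨ρ, hρ, u, p, q, w, hp', hq', h₁, h₂, h₁', h₂'⟩ := h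
  have mem_support (r : PathsIn V) (hr : r ∈ ρ.support) (h₁ : u.2.1 = r.1) (h₂ : r.2.1 = w.1) :
      pcomp V (pcomp V u r h₁) w h₂ ∈ (pmul k V u ρ w).support := by
    rwa [Finsupp.mem_support_iff, pmul_apply_pcomp_pcomp, ← Finsupp.mem_support_iff]
  exact memI_of_memI_of_card_support_le_two (pmul_mem_idealGen hρ u w)
    ((card_support_pmul_le u w ρ).trans (hcard ρ hρ)) (mem_support p hp' h₁ h₂)
    (mem_support q hq' h₁' h₂') hp

end Linked

section EqvGen

open Relation

variable {S : Set (PathVec k V)}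

lemma Relation.EqvGen.linked_ends_eq {p q : PathsIn V} (h : EqvGen (Linked S) p q) :
    p.1 = q.1 ∧ p.2.1 = q.2.1 := by
  induction h with
  | rel _ _ h => exact h.ends_eq
  | refl => exact ⟨rfl, rfl⟩
  | symm _ _ _ ih => exact ⟨ih.1.symm, ih.2.symm⟩
  | trans _ _ _ _ _ ih₁ ih₂ => exact ⟨ih₁.1.trans ih₂.1, ih₁.2.trans ih₂.2⟩

lemma Relation.EqvGen.linked_pcomp_pcomp {p q : PathsIn V} (h : EqvGen (Linked S) p q)
    (a b : PathsIn V) (ha : a.2.1 = p.1) (hb : p.2.1 = b.1) (ha' : a.2.1 = q.1)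
    (hb' : q.2.1 = b.1) :
    EqvGen (Linked S) (pcomp V (pcomp V a p ha) b hb) (pcomp V (pcomp V a q ha') b hb') := by
  induction h with
  | rel _ _ h => exact .rel _ _ (h.pcomp_pcomp a b ha hb ha' hb')
  | refl => exact .refl _
  | symm _ _ _ ih => exact .symm _ _ (ih ha' hb' ha hb)
  | trans _ _ _ hpr _ ih₁ ih₂ =>
    have ends := hpr.linked_ends_eq
    exact .trans _ _ _ (ih₁ ha hb (ha.trans ends.1) (ends.2.symm.trans hb))
      (ih₂ (ha.trans ends.1) (ends.2.symm.trans hb) ha' hb')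

lemma Relation.EqvGen.linked_memI_idealGen_iff (hcard : ∀ ρ ∈ S, ρ.support.card ≤ 2)
    {p q : PathsIn V} (h : EqvGen (Linked S) p q) :
    memI k V (idealGen k V S) p ↔ memI k V (idealGen k V S) q := by
  induction h with
  | rel _ _ h => exact ⟨h.memI_idealGen hcard, h.symm.memI_idealGen hcard⟩
  | refl => exact .rfl
  | symm _ _ _ ih => exact ih.symm
  | trans _ _ _ _ _ ih₁ ih₂ => exact ih₁.trans ih₂

lemma filter_mem_idealGen (P : PathsIn V → Prop) (hP : ∀ p q, Linked S p q → P p → P q)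
    {x : PathVec k V} (hx : x ∈ idealGen k V S) : x.filter P ∈ idealGen k V S := by
  induction hx using Submodule.span_induction with
  | mem _ hg =>
    obtain ⟨u, ρ, w, hρ, rfl⟩ := hg
    rcases Finsupp.filter_eq_self_or_eq_zero fun p hp q hq =>
      hP p q (Linked.of_mem_support_pmul hρ hp hq) with h | h <;> rw [h]
    · exact pmul_mem_idealGen hρ u w
    · exact Submodule.zero_mem _
  | zero => rw [Finsupp.filter_zero]; exact Submodule.zero_mem _
  | add _ _ _ _ hx hy => simpa [Finsupp.filter_add] using Submodule.add_mem _ hx hy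
  | smul c _ _ hx => simpa [Finsupp.filter_smul] using Submodule.smul_mem _ c hx

lemma IsMinimalRelation.eqvGen_linked {ρ : PathVec k V}
    (hρ : IsMinimalRelation k V (idealGen k V S) ρ) {p q : PathsIn V} (hp : p ∈ ρ.support)
    (hq : q ∈ ρ.support) : EqvGen (Linked S) p q := by
  obtain ⟨hρI, -, hproper⟩ := hρ
  set J := ρ.support.filter (EqvGen (Linked S) p)
  have hJ : ρ.filter (· ∈ J) = ρ.filter (EqvGen (Linked S) p) := by
    ext r
    by_cases hr : r ∈ ρ.support <;> simp_all [J, Finsupp.filter_apply]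
  have hJI : ρ.filter (· ∈ J) ∈ idealGen k V S := hJ ▸ filter_mem_idealGen _
    (fun _ _ h hpr => .trans _ _ _ hpr (.rel _ _ h)) hρI
  have hJsupp : J = ρ.support := by_contra fun hne =>
    hproper J (Finset.filter_subset _ _) ⟨p, Finset.mem_filter.mpr ⟨hp, .refl p⟩⟩ hne hJI
  exact (Finset.mem_filter.mp (hJsupp ▸ hq)).2

lemma HRel.eqvGen_linked {p q : PathsIn V} (h : HRel k V (idealGen k V S) p q) :
    EqvGen (Linked S) p q := by
  induction h with
  | of ρ hρ p q hp hq => exact hρ.eqvGen_linked hp hq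
  | refl => exact .refl _
  | symm _ ih => exact .symm _ _ ih
  | trans _ _ ih₁ ih₂ => exact .trans _ _ _ ih₁ ih₂
  | compat a x y b u v w w' _ ih =>
    exact ih.linked_pcomp_pcomp ⟨a, x, w⟩ ⟨y, b, w'⟩ rfl rfl rfl rfl

end EqvGen

end Linking

/-- If `I` is an admissible ideal of `kQ` generated by monomial
(paths) and binomial (two-term minimal) relations, then the presentation `(Q, I)`
is homotopy coherent. -/
theorem homotopyCoherent_of_monomial_binomial [Fintype V] [∀ x y : V, Fintype (x ⟶ y)]
    (I : Submodule k (PathVec k V)) (hadm : IsAdmissible k V I)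
    (S : Set (PathVec k V))
    (hcard : ∀ ρ ∈ S, ρ.support.card ≤ 2)
    (hmin : ∀ ρ ∈ S, ρ.support.card = 2 → IsMinimalRelation k V I ρ)
    (hgen : I = idealGen k V S) :
    HomotopyCoherent k V I := by
  subst hgen
  exact fun p q h => h.eqvGen_linked.linked_memI_idealGen_iff hcard
end

section
/- Let (Q, I) be a homotopy coherent presentation and let [u], [v] be classes of paths not equivalent to any path in I such that [u] = [v][u] (i.e., u ∼ vu). Then v is a trivial path (a path of length zero). -/
open Quiver

universe v u

variable (k : Type*) [Field k] (V : Type u) [Quiver.{v + 1} V]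

/-- A path represents a class in `Σ_ν`: no path equivalent to it lies in `I`. -/
def SigmaClass (I : Submodule k (PathVec k V)) (p : PathsIn V) : Prop :=
  ∀ q, HRel k V I p q → ¬ memI k V I q


section

variable {k V}

theorem HRel.endpoints_eq {I : Submodule k (PathVec k V)} {p q : PathsIn V}
    (h : HRel k V I p q) : p.1 = q.1 ∧ p.2.1 = q.2.1 := by
  induction h with
  | of ρ hρ p q hp hq =>
      obtain ⟨x, y, hxy⟩ := hρ.2.1
      exact ⟨(hxy p hp).1.trans (hxy q hq).1.symm, (hxy p hp).2.trans (hxy q hq).2.symm⟩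
  | refl => exact ⟨rfl, rfl⟩
  | symm _ ih => exact ⟨ih.1.symm, ih.2.symm⟩
  | trans _ _ ih₁ ih₂ => exact ⟨ih₁.1.trans ih₂.1, ih₁.2.trans ih₂.2⟩
  | compat => exact ⟨rfl, rfl⟩

theorem HRel.comp_left {I : Submodule k (PathVec k V)} {a x y : V} {p q : Path x y}
    (r : Path a x) (h : HRel k V I ⟨x, y, p⟩ ⟨x, y, q⟩) :
    HRel k V I ⟨a, y, r.comp p⟩ ⟨a, y, r.comp q⟩ :=
  HRel.compat a x y y p q r .nil h

/-- The invariant `w ∼ v w` propagates from `w = u` to `w = vⁿ u`, which is only recorded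
through its length. -/
theorem HRel.exists_length_eq_of_self_absorbing {I : Submodule k (PathVec k V)} {a b : V}
    {v : Path a a} {u : Path a b} (h : HRel k V I ⟨a, b, u⟩ ⟨a, b, v.comp u⟩) (n : ℕ) :
    ∃ w : Path a b, HRel k V I ⟨a, b, u⟩ ⟨a, b, w⟩ ∧ w.length = n * v.length + u.length := by
  suffices ∃ w : Path a b, HRel k V I ⟨a, b, u⟩ ⟨a, b, w⟩ ∧
      HRel k V I ⟨a, b, w⟩ ⟨a, b, v.comp w⟩ ∧ w.length = n * v.length + u.length from
    this.imp fun _ hw => ⟨hw.1, hw.2.2⟩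
  induction n with
  | zero => exact ⟨u, .refl _, h, by simp⟩
  | succ n ih =>
      obtain ⟨w, huw, hw, hlen⟩ := ih
      refine ⟨v.comp w, huw.trans hw, hw.comp_left v, ?_⟩
      rw [Path.length_comp, hlen]
      ring

theorem memI_of_le_pathLen {I : Submodule k (PathVec k V)} {m : ℕ} (hI : arrowPow k V m ≤ I)
    {p : PathsIn V} (hp : m ≤ pathLen V p) : memI k V I p :=
  hI (Submodule.subset_span ⟨p, hp, rfl⟩)

end

theorem trivial_of_self_absorbing (I : Submodule k (PathVec k V))
    (hadm : IsAdmissible k V I)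
    (u v : PathsIn V) (hu : SigmaClass k V I u)
    (h : v.2.1 = u.1) (heq : HRel k V I u (pcomp V v u h)) :
    pathLen V v = 0 := by
  obtain ⟨a, b, u⟩ := u
  obtain ⟨c, d, v⟩ := v
  have hca : c = a := heq.endpoints_eq.1.symm
  dsimp only at h
  subst hca h
  by_contra hv
  obtain ⟨⟨m, -, hm⟩, -⟩ := hadm
  obtain ⟨w, huw, hw⟩ := heq.exists_length_eq_of_self_absorbing m
  refine hu _ huw (memI_of_le_pathLen hm ?_)
  change m ≤ w.length
  rw [hw]
  exact Nat.le_add_right_of_le (Nat.le_mul_of_pos_right m (Nat.pos_of_ne_zero hv))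
end
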